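/- Weighted convolution generating identity: for a function a on partitions with a(∅)=1 and an arithmetic function f, as formal power series in q, ∑_{λ ≠ ∅} (μ_P * a)(λ) f(sm(λ)) q^{|λ|} = (q;q)_∞ · ∑_{n≥1} f(n) Ã_n(q) q^n / (q;q)_n, where Ã_n(q) := a((n)) - 1 + ∑_{γ: sm(γ) ≥ n} [a(γ·(n)) - a(γ)] q^{|γ|}. -/

import Mathlib

open Finset PowerSeries
open scoped Classical

/-- The partition Möbius function. -/
noncomputable def muP (l : Multiset ℕ) : ℂ :=
  if l.Nodup then (-1 : ℂ) ^ (Multiset.card l) else 0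

/-- Partition Dirichlet convolution `(a*b)(λ) = ∑_{δ|λ} a(δ) b(λ/δ)`. -/
noncomputable def pconv (a b : Multiset ℕ → ℂ) (l : Multiset ℕ) : ℂ :=
  ∑ d ∈ l.powerset.toFinset, a d * b (l - d)

/-- Smallest part of a partition (`0` for the empty partition). -/
def smPart (l : Multiset ℕ) : ℕ := (l.toFinset.min).untopD 0

/-- Largest part of a partition (`0` for the empty partition). -/
def lgPart (l : Multiset ℕ) : ℕ := (l.toFinset.max).unbotD 0

/-- The formal power series `∑_{λ : P(λ)} f(λ) q^{|λ|}`. -/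
noncomputable def psOn (P : Multiset ℕ → Prop) (f : Multiset ℕ → ℂ) :
    PowerSeries ℂ :=
  PowerSeries.mk fun n => ∑ p : Nat.Partition n, if P p.parts then f p.parts else 0

/-- The finite `q`-Pochhammer symbol `(q;q)_n = ∏_{k=1}^n (1-q^k)`. -/
noncomputable def qPochFin (n : ℕ) : PowerSeries ℂ :=
  ∏ k ∈ Finset.range n, (1 - (PowerSeries.X : PowerSeries ℂ) ^ (k + 1))

/-- `(q;q)_∞ = ∏_{k≥1}(1-q^k)`, defined coefficientwise (the partial
products stabilize in each degree). -/
noncomputable def qPochInf : PowerSeries ℂ :=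
  PowerSeries.mk fun n => PowerSeries.coeff n (qPochFin n)

/-- `(q^{n+1};q)_∞ = ∏_{k≥n+1}(1-q^k)`, defined coefficientwise. -/
noncomputable def qPochInfFrom (n : ℕ) : PowerSeries ℂ :=
  PowerSeries.mk fun m =>
    PowerSeries.coeff m
      (∏ k ∈ Finset.Icc (n + 1) m, (1 - (PowerSeries.X : PowerSeries ℂ) ^ k))

/-- `Ã_n(q) := a((n)) - 1 + ∑_{γ≠∅, sm(γ) ≥ n} [a(γ·(n)) - a(γ)] q^{|γ|}`. -/
noncomputable def Atilde (a : Multiset ℕ → ℂ) (n : ℕ) : PowerSeries ℂ :=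
  PowerSeries.C (a {n} - 1) +
    psOn (fun l => l ≠ 0 ∧ n ≤ smPart l) (fun l => a (n ::ₘ l) - a l)

/-! ### Auxiliary material -/

/-- The finset of part-multisets of partitions of `m`. -/
noncomputable def PF (m : ℕ) : Finset (Multiset ℕ) :=
  Finset.univ.image (Nat.Partition.parts (n := m))

lemma mem_PF {m : ℕ} {l : Multiset ℕ} :
    l ∈ PF m ↔ (∀ i ∈ l, 0 < i) ∧ l.sum = m := by
  constructor
  · rintro h
    simp only [PF, Finset.mem_image] at h
    obtain ⟨p, -, rfl⟩ := h
    exact ⟨fun i hi => p.parts_pos hi, p.parts_sum⟩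
  · rintro ⟨h1, h2⟩
    simp only [PF, Finset.mem_image]
    exact ⟨⟨l, fun {i} hi => h1 i hi, h2⟩, Finset.mem_univ _, rfl⟩

lemma sum_PF {m : ℕ} (g : Multiset ℕ → ℂ) :
    (∑ p : Nat.Partition m, g p.parts) = ∑ l ∈ PF m, g l := by
  rw [PF, Finset.sum_image]
  intro p _ q _ h
  exact Nat.Partition.ext h

lemma coeff_psOn (P : Multiset ℕ → Prop) (f : Multiset ℕ → ℂ) (i : ℕ) :
    PowerSeries.coeff i (psOn P f) = ∑ l ∈ PF i, if P l then f l else 0 := by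
  rw [psOn, PowerSeries.coeff_mk]
  exact sum_PF (fun l => if P l then f l else 0)

lemma smPart_mem {l : Multiset ℕ} (hl : l ≠ 0) : smPart l ∈ l := by
  have h : l.toFinset.Nonempty := by
    simp [Multiset.toFinset_nonempty, hl]
  rw [smPart, ← Finset.coe_min' h, WithTop.untopD_coe]
  exact Multiset.mem_toFinset.mp (Finset.min'_mem _ h)

lemma smPart_le {l : Multiset ℕ} {x : ℕ} (hx : x ∈ l) : smPart l ≤ x := by
  have h : l.toFinset.Nonempty := ⟨x, Multiset.mem_toFinset.mpr hx⟩
  rw [smPart, ← Finset.coe_min' h, WithTop.untopD_coe]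
  exact Finset.min'_le _ _ (Multiset.mem_toFinset.mpr hx)

lemma smPart_eq {l : Multiset ℕ} {n : ℕ} (h1 : n ∈ l) (h2 : ∀ x ∈ l, n ≤ x) :
    smPart l = n :=
  le_antisymm (smPart_le h1) (h2 _ (smPart_mem (by rintro rfl; simp at h1)))

lemma constCoeff_qPochFin (n : ℕ) : constantCoeff (qPochFin n) = 1 := by
  rw [qPochFin, map_prod]
  apply Finset.prod_eq_one
  intro k _
  simp

lemma qPochFin_split {n m : ℕ} (h : n ≤ m) :
    qPochFin m = qPochFin n * ∏ k ∈ Finset.Icc (n + 1) m,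
      (1 - (PowerSeries.X : PowerSeries ℂ) ^ k) := by
  rw [qPochFin, qPochFin, Finset.range_eq_Ico,
    ← Finset.prod_Ico_consecutive (fun k => (1 - (PowerSeries.X : PowerSeries ℂ) ^ (k + 1))) (Nat.zero_le n) h]
  congr 1
  · rw [Finset.range_eq_Ico]
  rw [← Finset.Ico_add_one_right_eq_Icc, Finset.prod_Ico_eq_prod_range, Finset.prod_Ico_eq_prod_range]
  apply Finset.prod_congr (by rw [Nat.add_sub_add_right])
  intro k _
  congr 2
  omega

lemma coeff_qPochFin_stable {j n m : ℕ} (h1 : j ≤ n) (h2 : n ≤ m) :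
    PowerSeries.coeff j (qPochFin m) = PowerSeries.coeff j (qPochFin n) := by
  induction m with
  | zero => interval_cases n; rfl
  | succ m ih =>
    rcases Nat.lt_or_ge n (m+1) with hlt | hge
    · have hm : n ≤ m := by omega
      rw [← ih hm, qPochFin, Finset.prod_range_succ, ← qPochFin, mul_sub, mul_one,
        map_sub, coeff_mul_X_pow']
      rw [if_neg (by omega), sub_zero]
    · have : n = m + 1 := by omega
      subst this; rfl

lemma coeff_prod_one_sub_X (s : Finset ℕ) (v : ℕ) :
    PowerSeries.coeff v (∏ k ∈ s, (1 - (PowerSeries.X : PowerSeries ℂ) ^ k)) =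
      ∑ t ∈ s.powerset, (if (∑ k ∈ t, k) = v then (-1 : ℂ) ^ t.card else 0) := by
  have key : (∏ k ∈ s, (1 - (PowerSeries.X : PowerSeries ℂ) ^ k)) =
      ∑ t ∈ s.powerset, ((-1 : ℂ) ^ t.card) • (PowerSeries.X : PowerSeries ℂ) ^ (∑ k ∈ t, k) := by
    have h1 : ∀ k : ℕ, (1 - (PowerSeries.X : PowerSeries ℂ) ^ k)
        = (-(PowerSeries.X ^ k) + 1) := by intro k; ring
    simp_rw [h1]
    rw [Finset.prod_add]
    apply Finset.sum_congr rfl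
    intro t _
    rw [Finset.prod_const_one, mul_one]
    have h2 : ∀ k ∈ t, -(PowerSeries.X : PowerSeries ℂ) ^ k
        = (-1 : PowerSeries ℂ) * (PowerSeries.X : PowerSeries ℂ) ^ k := by intro k _; ring
    rw [Finset.prod_congr rfl h2, Finset.prod_mul_distrib, Finset.prod_const,
      Finset.prod_pow_eq_pow_sum, PowerSeries.smul_eq_C_mul]
    congr 1
    rw [map_pow, map_neg, map_one]
  rw [key, map_sum]
  apply Finset.sum_congr rfl
  intro t _
  rw [PowerSeries.coeff_smul, PowerSeries.coeff_X_pow]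
  by_cases h : (∑ k ∈ t, k) = v
  · rw [if_pos h, if_pos h.symm, smul_eq_mul, mul_one]
  · rw [if_neg h, if_neg (fun hh => h hh.symm), smul_zero]

lemma coeff_Atilde (a : Multiset ℕ → ℂ) (ha : a 0 = 1) (n i : ℕ) :
    PowerSeries.coeff i (Atilde a n) =
      ∑ g ∈ PF i, if (∀ x ∈ g, n ≤ x) then a (n ::ₘ g) - a g else 0 := by
  rw [Atilde, map_add, coeff_psOn, PowerSeries.coeff_C]
  by_cases hi : i = 0
  · subst hi
    have hPF : PF 0 = {0} := by
      ext l
      simp only [mem_PF, Finset.mem_singleton]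
      constructor
      · rintro ⟨hpos, hsum⟩
        rw [Multiset.eq_zero_iff_forall_notMem]
        intro x hx
        have := hpos x hx
        have := Multiset.sum_eq_zero_iff.mp hsum x hx
        omega
      · rintro rfl; simp
    rw [hPF, if_pos rfl]
    simp only [Finset.sum_singleton]
    rw [if_neg (by simp), if_pos (by simp), ha]
    have : (n ::ₘ (0 : Multiset ℕ)) = {n} := rfl
    rw [this, add_zero]
  · rw [if_neg hi, zero_add]
    apply Finset.sum_congr rfl
    intro l hl
    obtain ⟨hpos, hsum⟩ := mem_PF.mp hl
    have hl0 : l ≠ 0 := by rintro rfl; simp at hsum; omega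
    have hiff : (l ≠ 0 ∧ n ≤ smPart l) ↔ (∀ x ∈ l, n ≤ x) := by
      constructor
      · rintro ⟨-, h2⟩ x hx
        exact le_trans h2 (smPart_le hx)
      · intro h
        exact ⟨hl0, h _ (smPart_mem hl0)⟩
    by_cases hc : ∀ x ∈ l, n ≤ x
    · rw [if_pos (hiff.mpr hc), if_pos hc]
    · rw [if_neg (fun hh => hc (hiff.mp hh)), if_neg hc]


attribute [irreducible] PF

noncomputable def PFle (M : ℕ) : Finset (Multiset ℕ) :=
  (Finset.range (M + 1)).biUnion PF

lemma mem_PFle {M : ℕ} {l : Multiset ℕ} :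
    l ∈ PFle M ↔ (∀ i ∈ l, 0 < i) ∧ l.sum ≤ M := by
  simp only [PFle, Finset.mem_biUnion, Finset.mem_range, mem_PF]
  constructor
  · rintro ⟨k, hk, hpos, rfl⟩
    exact ⟨hpos, by omega⟩
  · rintro ⟨hpos, hle⟩
    exact ⟨l.sum, by omega, hpos, rfl⟩

attribute [irreducible] PFle

lemma msum_le {s t : Multiset ℕ} (h : s ≤ t) : s.sum ≤ t.sum := by
  obtain ⟨u, rfl⟩ := Multiset.le_iff_exists_add.mp h
  simp

lemma tsum_val (t : Finset ℕ) : (∑ k ∈ t, k) = t.val.sum := by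
  show (Multiset.map (fun k => k) t.val).sum = t.val.sum
  rw [Multiset.map_id']

set_option maxHeartbeats 1000000 in
lemma lhs_eq (a : Multiset ℕ → ℂ) (n m : ℕ) :
    (∑ l ∈ PF m, if l ≠ 0 ∧ smPart l = n then pconv muP a l else 0) =
      ∑ x ∈ ((PF m) ×ˢ (PFle m)).filter
        (fun x => x.2 ≤ x.1 ∧ x.1 ≠ 0 ∧ smPart x.1 = n ∧ x.2.Nodup),
        (-1 : ℂ) ^ (Multiset.card x.2) * a (x.1 - x.2) := by
  have step1 : ∀ l ∈ PF m,
      (if l ≠ 0 ∧ smPart l = n then pconv muP a l else 0) =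
      ∑ d ∈ PFle m, if d ≤ l ∧ l ≠ 0 ∧ smPart l = n then muP d * a (l - d) else 0 := by
    intro l hl
    obtain ⟨hpos, hsum⟩ := mem_PF.mp hl
    by_cases hc : l ≠ 0 ∧ smPart l = n
    · rw [if_pos hc, pconv]
      have hset : l.powerset.toFinset = (PFle m).filter (· ≤ l) := by
        ext d
        simp only [Multiset.mem_toFinset, Multiset.mem_powerset, Finset.mem_filter, mem_PFle]
        constructor
        · intro h
          exact ⟨⟨fun i hi => hpos i (Multiset.mem_of_le h hi), hsum ▸ msum_le h⟩, h⟩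
        · exact fun h => h.2
      rw [hset, Finset.sum_filter]
      apply Finset.sum_congr rfl
      intro d _
      by_cases hd : d ≤ l
      · rw [if_pos hd, if_pos ⟨hd, hc⟩]
      · rw [if_neg hd, if_neg (fun hh => hd hh.1)]
    · rw [if_neg hc]
      symm
      apply Finset.sum_eq_zero
      intro d _
      rw [if_neg (fun hh => hc hh.2)]
  rw [Finset.sum_congr rfl step1, ← Finset.sum_product', ← Finset.sum_filter]
  have hsub : ((PF m) ×ˢ (PFle m)).filter
        (fun x => x.2 ≤ x.1 ∧ x.1 ≠ 0 ∧ smPart x.1 = n ∧ x.2.Nodup) ⊆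
      ((PF m) ×ˢ (PFle m)).filter
        (fun x => x.2 ≤ x.1 ∧ x.1 ≠ 0 ∧ smPart x.1 = n) := by
    intro x hx
    simp only [Finset.mem_filter] at hx ⊢
    tauto
  have hvan : ∀ x ∈ ((PF m) ×ˢ (PFle m)).filter
        (fun x => x.2 ≤ x.1 ∧ x.1 ≠ 0 ∧ smPart x.1 = n),
      x ∉ ((PF m) ×ˢ (PFle m)).filter
        (fun x => x.2 ≤ x.1 ∧ x.1 ≠ 0 ∧ smPart x.1 = n ∧ x.2.Nodup) →
      muP x.2 * a (x.1 - x.2) = 0 := by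
    intro x hx hx'
    simp only [Finset.mem_filter] at hx hx'
    have hnd : ¬ x.2.Nodup := by tauto
    rw [muP, if_neg hnd, zero_mul]
  rw [← Finset.sum_subset hsub hvan]
  apply Finset.sum_congr rfl
  intro x hx
  simp only [Finset.mem_filter] at hx
  rw [muP, if_pos hx.2.2.2.2]

set_option maxHeartbeats 1000000 in
lemma rhs_eq (a : Multiset ℕ → ℂ) (ha : a 0 = 1) {n m : ℕ} (hnm : n ≤ m) :
    PowerSeries.coeff m (Atilde a n * PowerSeries.X ^ n *
        ∏ k ∈ Finset.Icc (n + 1) m, (1 - (PowerSeries.X : PowerSeries ℂ) ^ k)) =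
      ∑ x ∈ (((Finset.Icc (n + 1) m).powerset) ×ˢ (PFle (m - n))).filter
        (fun x => (∑ k ∈ x.1, k) ≤ m - n ∧ x.2.sum = m - n - (∑ k ∈ x.1, k) ∧
          ∀ y ∈ x.2, n ≤ y),
        (-1 : ℂ) ^ x.1.card * (a (n ::ₘ x.2) - a x.2) := by
  have h1 : Atilde a n * PowerSeries.X ^ n *
      (∏ k ∈ Finset.Icc (n + 1) m, (1 - (PowerSeries.X : PowerSeries ℂ) ^ k)) =
      (Atilde a n * ∏ k ∈ Finset.Icc (n + 1) m,
        (1 - (PowerSeries.X : PowerSeries ℂ) ^ k)) * PowerSeries.X ^ n := by ring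
  rw [h1, coeff_mul_X_pow', if_pos hnm, PowerSeries.coeff_mul,
    Finset.Nat.sum_antidiagonal_eq_sum_range_succ
      (fun i v => PowerSeries.coeff i (Atilde a n) * PowerSeries.coeff v
        (∏ k ∈ Finset.Icc (n + 1) m, (1 - (PowerSeries.X : PowerSeries ℂ) ^ k))) (m - n)]
  set N := m - n with hN
  set pow := (Finset.Icc (n + 1) m).powerset with hpow
  set cA : ℕ → ℂ := fun k => ∑ g ∈ PF k, if (∀ x ∈ g, n ≤ x) then a (n ::ₘ g) - a g else 0
    with hcA
  have h2 : ∀ k ∈ Finset.range (N + 1),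
      PowerSeries.coeff k (Atilde a n) * PowerSeries.coeff (N - k)
        (∏ j ∈ Finset.Icc (n + 1) m, (1 - (PowerSeries.X : PowerSeries ℂ) ^ j)) =
      ∑ t ∈ pow, (if (∑ j ∈ t, j) = N - k then (-1 : ℂ) ^ t.card * cA k else 0) := by
    intro k _
    rw [coeff_Atilde a ha, coeff_prod_one_sub_X, mul_comm, Finset.sum_mul]
    apply Finset.sum_congr rfl
    intro t _
    rw [ite_mul, zero_mul]
  rw [Finset.sum_congr rfl h2, Finset.sum_comm]
  have h3 : ∀ t ∈ pow,
      (∑ k ∈ Finset.range (N + 1), if (∑ j ∈ t, j) = N - k then (-1 : ℂ) ^ t.card * cA k else 0)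
      = if (∑ j ∈ t, j) ≤ N then (-1 : ℂ) ^ t.card * cA (N - (∑ j ∈ t, j)) else 0 := by
    intro t _
    by_cases h : (∑ j ∈ t, j) ≤ N
    · rw [if_pos h, Finset.sum_eq_single (N - (∑ j ∈ t, j))]
      · rw [if_pos (by omega)]
      · intro b hb hbne
        rw [Finset.mem_range] at hb
        rw [if_neg (by omega)]
      · intro hmem
        rw [Finset.mem_range] at hmem
        omega
    · rw [if_neg h]
      apply Finset.sum_eq_zero
      intro k hk
      rw [Finset.mem_range] at hk
      rw [if_neg (by omega)]
  rw [Finset.sum_congr rfl h3]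
  have h4 : ∀ t ∈ pow,
      (if (∑ j ∈ t, j) ≤ N then (-1 : ℂ) ^ t.card * cA (N - (∑ j ∈ t, j)) else 0)
      = ∑ g ∈ PFle N, if ((∑ j ∈ t, j) ≤ N ∧ g.sum = N - (∑ j ∈ t, j) ∧ ∀ y ∈ g, n ≤ y)
          then (-1 : ℂ) ^ t.card * (a (n ::ₘ g) - a g) else 0 := by
    intro t _
    by_cases h : (∑ j ∈ t, j) ≤ N
    · rw [if_pos h, hcA]
      have congr1 : (∑ g ∈ PF (N - ∑ j ∈ t, j),
          (-1 : ℂ) ^ t.card * if ∀ x ∈ g, n ≤ x then a (n ::ₘ g) - a g else 0)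
          = ∑ g ∈ PF (N - ∑ j ∈ t, j),
            (if ((∑ j ∈ t, j) ≤ N ∧ g.sum = N - (∑ j ∈ t, j) ∧ ∀ y ∈ g, n ≤ y)
              then (-1 : ℂ) ^ t.card * (a (n ::ₘ g) - a g) else 0) := by
        apply Finset.sum_congr rfl
        intro g hg
        obtain ⟨hgpos, hgsum⟩ := mem_PF.mp hg
        rw [mul_ite, mul_zero]
        by_cases hq : ∀ y ∈ g, n ≤ y
        · rw [if_pos hq, if_pos ⟨h, hgsum, hq⟩]
        · rw [if_neg hq, if_neg (by tauto)]
      rw [Finset.mul_sum, congr1]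
      apply Finset.sum_subset
      · intro g hg
        obtain ⟨h1', h2'⟩ := mem_PF.mp hg
        exact mem_PFle.mpr ⟨h1', by omega⟩
      · intro g hg hg'
        rw [if_neg]
        rintro ⟨-, hsum, -⟩
        obtain ⟨hgpos, -⟩ := mem_PFle.mp hg
        exact hg' (mem_PF.mpr ⟨hgpos, hsum⟩)
    · rw [if_neg h]
      symm
      apply Finset.sum_eq_zero
      intro g _
      rw [if_neg (by tauto)]
  rw [Finset.sum_congr rfl h4, ← Finset.sum_product', ← Finset.sum_filter]

set_option maxHeartbeats 1000000 in
lemma bijA (a : Multiset ℕ → ℂ) {n m : ℕ} (hn : 1 ≤ n) (hnm : n ≤ m) :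
    ∑ x ∈ (((PF m) ×ˢ (PFle m)).filter
        (fun x => (x.2 ≤ x.1 ∧ x.1 ≠ 0 ∧ smPart x.1 = n ∧ x.2.Nodup) ∧ n ∉ x.2)),
      (-1 : ℂ) ^ (Multiset.card x.2) * a (x.1 - x.2) =
    ∑ x ∈ (((Finset.Icc (n + 1) m).powerset) ×ˢ (PFle (m - n))).filter
        (fun x => (∑ k ∈ x.1, k) ≤ m - n ∧ x.2.sum = m - n - (∑ k ∈ x.1, k) ∧
          ∀ y ∈ x.2, n ≤ y),
      (-1 : ℂ) ^ x.1.card * a (n ::ₘ x.2) := by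
  apply Finset.sum_nbij'
    (i := fun x => (x.2.toFinset, (x.1 - x.2).erase n))
    (j := fun y => (n ::ₘ (y.2 + y.1.val), y.1.val))
  · -- forward membership
    rintro ⟨l, d⟩ hx
    simp only [Finset.mem_filter, Finset.mem_product] at hx
    obtain ⟨⟨hlPF, hdPF⟩, ⟨hld, hl0, hsm, hnd⟩, hnin⟩ := hx
    obtain ⟨hlpos, hlsum⟩ := mem_PF.mp hlPF
    have hval : d.toFinset.val = d := by
      rw [Multiset.toFinset_val, Multiset.dedup_eq_self.mpr hnd]
    have hQl : ∀ y ∈ l, n ≤ y := fun y hy => hsm ▸ smPart_le hy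
    have hnl : n ∈ l := hsm ▸ smPart_mem hl0
    have hmemd : ∀ y ∈ d, n + 1 ≤ y ∧ y ≤ m := by
      intro y hy
      have hyl : y ∈ l := Multiset.mem_of_le hld hy
      have h1 : n ≤ y := hQl y hyl
      have h2 : y ≠ n := fun h => hnin (h ▸ hy)
      have h3 : y ≤ l.sum := Multiset.single_le_sum (fun z _ => Nat.zero_le z) _ hyl
      exact ⟨by omega, by omega⟩
    have hconsle : n ::ₘ d ≤ l := by
      rw [Multiset.le_iff_count]
      intro y
      by_cases hy : y = n
      · subst hy
        rw [Multiset.count_cons_self, Multiset.count_eq_zero.mpr hnin]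
        have := Multiset.count_pos.mpr hnl; omega
      · rw [Multiset.count_cons_of_ne hy]
        exact Multiset.le_iff_count.mp hld y
    have hsums : n + d.sum ≤ m := by
      have := msum_le hconsle
      rw [Multiset.sum_cons, hlsum] at this
      exact this
    have htsum : (∑ k ∈ d.toFinset, k) = d.sum := by rw [tsum_val, hval]
    have hnld : n ∈ l - d := by
      rw [← Multiset.count_pos, Multiset.count_sub, Multiset.count_eq_zero.mpr hnin]
      have := Multiset.count_pos.mpr hnl
      omega
    have hgle : (l - d).erase n ≤ l :=
      le_trans (Multiset.erase_le n (l - d)) (Multiset.sub_le_self l d)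
    have e1 : (l - d).sum + d.sum = m := by
      rw [← Multiset.sum_add, tsub_add_cancel_of_le hld, hlsum]
    have e2 : n + ((l - d).erase n).sum = (l - d).sum := by
      rw [← Multiset.sum_cons, Multiset.cons_erase hnld]
    simp only [Finset.mem_filter, Finset.mem_product]
    refine ⟨⟨?_, ?_⟩, ?_, ?_, ?_⟩
    · rw [Finset.mem_powerset]
      intro y hy
      rw [Multiset.mem_toFinset] at hy
      rw [Finset.mem_Icc]
      exact hmemd y hy
    · rw [mem_PFle]
      constructor
      · intro y hy
        exact hlpos y (Multiset.mem_of_le hgle hy)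
      · omega
    · rw [htsum]; omega
    · rw [htsum]; omega
    · intro y hy
      exact hQl y (Multiset.mem_of_le hgle hy)
  · -- backward membership
    rintro ⟨t, g⟩ hy
    simp only [Finset.mem_filter, Finset.mem_product] at hy
    obtain ⟨⟨htpow, hgPF⟩, hts, hgs, hQ⟩ := hy
    rw [Finset.mem_powerset] at htpow
    obtain ⟨hgpos, hgsum⟩ := mem_PFle.mp hgPF
    have htv : ∀ y ∈ t.val, n + 1 ≤ y ∧ y ≤ m := by
      intro y hy
      have := htpow hy
      rwa [Finset.mem_Icc] at this
    have htvsum : t.val.sum = ∑ k ∈ t, k := (tsum_val t).symm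
    simp only [Finset.mem_filter, Finset.mem_product]
    refine ⟨⟨?_, ?_⟩, ⟨?_, ?_, ?_, ?_⟩, ?_⟩
    · rw [mem_PF]
      constructor
      · intro y hy
        rw [Multiset.mem_cons] at hy
        rcases hy with rfl | hy
        · omega
        · rw [Multiset.mem_add] at hy
          rcases hy with hy | hy
          · exact hgpos y hy
          · have := (htv y hy).1; omega
      · rw [Multiset.sum_cons, Multiset.sum_add, htvsum]
        omega
    · rw [mem_PFle]
      constructor
      · intro y hy
        have := (htv y hy).1; omega
      · rw [htvsum]; omega
    · exact le_trans (Multiset.le_add_left _ _) (Multiset.le_cons_self _ _)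
    · exact Multiset.cons_ne_zero
    · apply smPart_eq (Multiset.mem_cons_self n _)
      intro y hy
      rw [Multiset.mem_cons] at hy
      rcases hy with rfl | hy
      · omega
      · rw [Multiset.mem_add] at hy
        rcases hy with hy | hy
        · exact hQ y hy
        · have := (htv y hy).1; omega
    · exact t.nodup
    · intro hmem
      have := (htv n hmem).1; omega
  · -- left inverse
    rintro ⟨l, d⟩ hx
    simp only [Finset.mem_filter, Finset.mem_product] at hx
    obtain ⟨⟨hlPF, hdPF⟩, ⟨hld, hl0, hsm, hnd⟩, hnin⟩ := hx
    have hval : d.toFinset.val = d := by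
      rw [Multiset.toFinset_val, Multiset.dedup_eq_self.mpr hnd]
    have hnl : n ∈ l := hsm ▸ smPart_mem hl0
    have hnld : n ∈ l - d := by
      rw [← Multiset.count_pos, Multiset.count_sub, Multiset.count_eq_zero.mpr hnin]
      have := Multiset.count_pos.mpr hnl
      omega
    have h1 : n ::ₘ ((l - d).erase n + d.toFinset.val) = l := by
      rw [hval, ← Multiset.cons_add, Multiset.cons_erase hnld, tsub_add_cancel_of_le hld]
    exact Prod.ext h1 hval
  · -- right inverse
    rintro ⟨t, g⟩ hy
    have h1 : (t.val).toFinset = t := Finset.val_toFinset t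
    have h2 : (n ::ₘ (g + t.val) - t.val).erase n = g := by
      rw [← Multiset.cons_add, add_tsub_cancel_right, Multiset.erase_cons_head]
    exact Prod.ext h1 h2
  · -- values
    rintro ⟨l, d⟩ hx
    simp only [Finset.mem_filter, Finset.mem_product] at hx
    obtain ⟨⟨hlPF, hdPF⟩, ⟨hld, hl0, hsm, hnd⟩, hnin⟩ := hx
    have hval : d.toFinset.val = d := by
      rw [Multiset.toFinset_val, Multiset.dedup_eq_self.mpr hnd]
    have hnl : n ∈ l := hsm ▸ smPart_mem hl0
    have hnld : n ∈ l - d := by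
      rw [← Multiset.count_pos, Multiset.count_sub, Multiset.count_eq_zero.mpr hnin]
      have := Multiset.count_pos.mpr hnl
      omega
    simp only
    rw [Multiset.cons_erase hnld]
    congr 2
    rw [Finset.card_def, hval]

set_option maxHeartbeats 1000000 in
lemma bijB (a : Multiset ℕ → ℂ) {n m : ℕ} (hn : 1 ≤ n) (hnm : n ≤ m) :
    ∑ x ∈ (((PF m) ×ˢ (PFle m)).filter
        (fun x => (x.2 ≤ x.1 ∧ x.1 ≠ 0 ∧ smPart x.1 = n ∧ x.2.Nodup) ∧ n ∈ x.2)),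
      (-1 : ℂ) ^ (Multiset.card x.2) * a (x.1 - x.2) =
    ∑ x ∈ (((Finset.Icc (n + 1) m).powerset) ×ˢ (PFle (m - n))).filter
        (fun x => (∑ k ∈ x.1, k) ≤ m - n ∧ x.2.sum = m - n - (∑ k ∈ x.1, k) ∧
          ∀ y ∈ x.2, n ≤ y),
      -((-1 : ℂ) ^ x.1.card * a x.2) := by
  apply Finset.sum_nbij'
    (i := fun x => ((x.2.erase n).toFinset, x.1 - x.2))
    (j := fun y => (n ::ₘ (y.2 + y.1.val), n ::ₘ y.1.val))
  · -- forward membership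
    rintro ⟨l, d⟩ hx
    simp only [Finset.mem_filter, Finset.mem_product] at hx
    obtain ⟨⟨hlPF, hdPF⟩, ⟨hld, hl0, hsm, hnd⟩, hnin⟩ := hx
    obtain ⟨hlpos, hlsum⟩ := mem_PF.mp hlPF
    have hval : (d.erase n).toFinset.val = d.erase n := by
      rw [Multiset.toFinset_val, Multiset.dedup_eq_self.mpr (hnd.erase n)]
    have hQl : ∀ y ∈ l, n ≤ y := fun y hy => hsm ▸ smPart_le hy
    have hmemd : ∀ y ∈ d.erase n, n + 1 ≤ y ∧ y ≤ m := by
      intro y hy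
      rw [hnd.mem_erase_iff] at hy
      have hyl : y ∈ l := Multiset.mem_of_le hld hy.2
      have h1 : n ≤ y := hQl y hyl
      have h3 : y ≤ l.sum := Multiset.single_le_sum (fun z _ => Nat.zero_le z) _ hyl
      have h2 : y ≠ n := hy.1
      exact ⟨by omega, by omega⟩
    have hdm : d.sum ≤ m := hlsum ▸ msum_le hld
    have hde : n + (d.erase n).sum = d.sum := by
      rw [← Multiset.sum_cons, Multiset.cons_erase hnin]
    have htsum : (∑ k ∈ (d.erase n).toFinset, k) = (d.erase n).sum := by
      rw [tsum_val, hval]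
    have e1 : (l - d).sum + d.sum = m := by
      rw [← Multiset.sum_add, tsub_add_cancel_of_le hld, hlsum]
    simp only [Finset.mem_filter, Finset.mem_product]
    refine ⟨⟨?_, ?_⟩, ?_, ?_, ?_⟩
    · rw [Finset.mem_powerset]
      intro y hy
      rw [Multiset.mem_toFinset] at hy
      rw [Finset.mem_Icc]
      exact hmemd y hy
    · rw [mem_PFle]
      constructor
      · intro y hy
        exact hlpos y (Multiset.mem_of_le (Multiset.sub_le_self l d) hy)
      · omega
    · rw [htsum]; omega
    · rw [htsum]; omega
    · intro y hy
      exact hQl y (Multiset.mem_of_le (Multiset.sub_le_self l d) hy)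
  · -- backward membership
    rintro ⟨t, g⟩ hy
    simp only [Finset.mem_filter, Finset.mem_product] at hy
    obtain ⟨⟨htpow, hgPF⟩, hts, hgs, hQ⟩ := hy
    rw [Finset.mem_powerset] at htpow
    obtain ⟨hgpos, hgsum⟩ := mem_PFle.mp hgPF
    have htv : ∀ y ∈ t.val, n + 1 ≤ y ∧ y ≤ m := by
      intro y hy
      have := htpow hy
      rwa [Finset.mem_Icc] at this
    have htvsum : t.val.sum = ∑ k ∈ t, k := (tsum_val t).symm
    have hnnt : n ∉ t.val := fun hmem => by have := (htv n hmem).1; omega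
    simp only [Finset.mem_filter, Finset.mem_product]
    refine ⟨⟨?_, ?_⟩, ⟨?_, ?_, ?_, ?_⟩, ?_⟩
    · rw [mem_PF]
      constructor
      · intro y hy
        rw [Multiset.mem_cons] at hy
        rcases hy with rfl | hy
        · omega
        · rw [Multiset.mem_add] at hy
          rcases hy with hy | hy
          · exact hgpos y hy
          · have := (htv y hy).1; omega
      · rw [Multiset.sum_cons, Multiset.sum_add, htvsum]
        omega
    · rw [mem_PFle]
      constructor
      · intro y hy
        rw [Multiset.mem_cons] at hy
        rcases hy with rfl | hy
        · omega
        · have := (htv y hy).1; omega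
      · rw [Multiset.sum_cons, htvsum]; omega
    · exact Multiset.cons_le_cons n (Multiset.le_add_left _ _)
    · exact Multiset.cons_ne_zero
    · apply smPart_eq (Multiset.mem_cons_self n _)
      intro y hy
      rw [Multiset.mem_cons] at hy
      rcases hy with rfl | hy
      · omega
      · rw [Multiset.mem_add] at hy
        rcases hy with hy | hy
        · exact hQ y hy
        · have := (htv y hy).1; omega
    · rw [Multiset.nodup_cons]
      exact ⟨hnnt, t.nodup⟩
    · exact Multiset.mem_cons_self n _
  · -- left inverse
    rintro ⟨l, d⟩ hx
    simp only [Finset.mem_filter, Finset.mem_product] at hx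
    obtain ⟨⟨hlPF, hdPF⟩, ⟨hld, hl0, hsm, hnd⟩, hnin⟩ := hx
    have hval : (d.erase n).toFinset.val = d.erase n := by
      rw [Multiset.toFinset_val, Multiset.dedup_eq_self.mpr (hnd.erase n)]
    have h2 : n ::ₘ (d.erase n).toFinset.val = d := by
      rw [hval, Multiset.cons_erase hnin]
    have h1 : n ::ₘ ((l - d) + (d.erase n).toFinset.val) = l := by
      rw [add_comm, ← Multiset.cons_add, h2, add_comm, tsub_add_cancel_of_le hld]
    exact Prod.ext h1 h2
  · -- right inverse
    rintro ⟨t, g⟩ hy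
    simp only [Finset.mem_filter, Finset.mem_product] at hy
    obtain ⟨⟨htpow, hgPF⟩, hts, hgs, hQ⟩ := hy
    rw [Finset.mem_powerset] at htpow
    have h1 : ((n ::ₘ t.val).erase n).toFinset = t := by
      rw [Multiset.erase_cons_head, Finset.val_toFinset]
    have h2 : n ::ₘ (g + t.val) - (n ::ₘ t.val) = g := by
      rw [Multiset.sub_cons, Multiset.erase_cons_head, add_tsub_cancel_right]
    exact Prod.ext h1 h2
  · -- values
    rintro ⟨l, d⟩ hx
    simp only [Finset.mem_filter, Finset.mem_product] at hx
    obtain ⟨⟨hlPF, hdPF⟩, ⟨hld, hl0, hsm, hnd⟩, hnin⟩ := hx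
    have hval : (d.erase n).toFinset.val = d.erase n := by
      rw [Multiset.toFinset_val, Multiset.dedup_eq_self.mpr (hnd.erase n)]
    have hcard : (d.erase n).toFinset.card + 1 = Multiset.card d := by
      rw [Finset.card_def, hval, Multiset.card_erase_of_mem hnin,
        Nat.pred_eq_sub_one]
      have : Multiset.card d ≠ 0 := by
        intro h
        rw [Multiset.card_eq_zero] at h
        subst h
        simp at hnin
      omega
    simp only
    rw [← hcard, pow_succ]
    ring

/-- The combinatorial core. -/
lemma core (a : Multiset ℕ → ℂ) (ha : a 0 = 1) {n m : ℕ} (hn : 1 ≤ n) (hnm : n ≤ m) :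
    (∑ l ∈ PF m, if l ≠ 0 ∧ smPart l = n then pconv muP a l else 0) =
      PowerSeries.coeff m
        (Atilde a n * PowerSeries.X ^ n *
          ∏ k ∈ Finset.Icc (n + 1) m, (1 - (PowerSeries.X : PowerSeries ℂ) ^ k)) := by
  rw [lhs_eq a n m, rhs_eq a ha hnm,
    ← Finset.sum_filter_add_sum_filter_not (((PF m) ×ˢ (PFle m)).filter
      (fun x => x.2 ≤ x.1 ∧ x.1 ≠ 0 ∧ smPart x.1 = n ∧ x.2.Nodup))
      (fun x => n ∈ x.2), Finset.filter_filter, Finset.filter_filter,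
    bijB a hn hnm, bijA a hn hnm, ← Finset.sum_add_distrib]
  apply Finset.sum_congr rfl
  intro x hx
  ring

/-- Weighted convolution generating identity: for `a(∅)=1` and an arithmetic
function `f`, as formal power series,
`∑_{λ≠∅} (μ_P*a)(λ) f(sm(λ)) q^{|λ|} = (q;q)_∞ ∑_{n≥1} f(n) Ã_n(q) q^n/(q;q)_n`
(the `n`-th term on the right has order at least `n`, so the series is
defined coefficientwise). -/
theorem weighted_convolution_identity (a : Multiset ℕ → ℂ) (ha : a 0 = 1)
    (f : ℕ → ℂ) :
    psOn (fun l => l ≠ 0) (fun l => pconv muP a l * f (smPart l)) =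
      qPochInf *
        PowerSeries.mk (fun m => ∑ n ∈ Finset.Icc 1 m,
          PowerSeries.coeff m
            (PowerSeries.C (f n) * Atilde a n * PowerSeries.X ^ n *
              (qPochFin n)⁻¹)) := by
  ext m
  -- abbreviations
  set T : ℕ → PowerSeries ℂ := fun n =>
    PowerSeries.C (f n) * Atilde a n * PowerSeries.X ^ n * (qPochFin n)⁻¹ with hT
  set S : PowerSeries ℂ := ∑ n ∈ Finset.Icc 1 m, T n with hS
  -- coefficient of T n vanishes below degree n
  have hTcoeff : ∀ n i : ℕ, i < n → PowerSeries.coeff i (T n) = 0 := by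
    intro n i hin
    have : T n = (PowerSeries.C (f n) * Atilde a n * (qPochFin n)⁻¹) *
        PowerSeries.X ^ n := by rw [hT]; ring
    rw [this, coeff_mul_X_pow', if_neg (by omega)]
  -- RHS coefficient equals coefficient of qPochInf * S
  have step1 : PowerSeries.coeff m
      (qPochInf * PowerSeries.mk (fun i => ∑ n ∈ Finset.Icc 1 i,
        PowerSeries.coeff i (T n))) = PowerSeries.coeff m (qPochFin m * S) := by
    rw [PowerSeries.coeff_mul, PowerSeries.coeff_mul]
    apply Finset.sum_congr rfl
    rintro ⟨u, v⟩ huv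
    rw [Finset.HasAntidiagonal.mem_antidiagonal] at huv
    have hu : u ≤ m := by omega
    have hv : v ≤ m := by omega
    congr 1
    · rw [qPochInf, PowerSeries.coeff_mk, coeff_qPochFin_stable le_rfl hu]
    · rw [PowerSeries.coeff_mk, hS, map_sum]
      rw [Finset.sum_subset (Finset.Icc_subset_Icc_right hv)]
      intro n hn hn'
      simp only [Finset.mem_Icc] at hn hn'
      exact hTcoeff n v (by omega)
  -- per-term simplification of qPochFin m * T n
  have step2 : ∀ n, 1 ≤ n → n ≤ m → qPochFin m * T n =
      PowerSeries.C (f n) * (Atilde a n * PowerSeries.X ^ n *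
        ∏ k ∈ Finset.Icc (n + 1) m, (1 - (PowerSeries.X : PowerSeries ℂ) ^ k)) := by
    intro n hn1 hnm
    rw [hT]
    rw [qPochFin_split hnm]
    have hinv : (qPochFin n)⁻¹ * qPochFin n = 1 := by
      apply PowerSeries.inv_mul_cancel
      rw [constCoeff_qPochFin]; exact one_ne_zero
    calc qPochFin n * (∏ k ∈ Finset.Icc (n + 1) m, (1 - (PowerSeries.X : PowerSeries ℂ) ^ k)) *
          (PowerSeries.C (f n) * Atilde a n * PowerSeries.X ^ n * (qPochFin n)⁻¹)
        = ((qPochFin n)⁻¹ * qPochFin n) * (PowerSeries.C (f n) * (Atilde a n * PowerSeries.X ^ n *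
            ∏ k ∈ Finset.Icc (n + 1) m, (1 - (PowerSeries.X : PowerSeries ℂ) ^ k))) := by ring
      _ = _ := by rw [hinv, one_mul]
  -- LHS coefficient
  have step3 : PowerSeries.coeff m
      (psOn (fun l => l ≠ 0) (fun l => pconv muP a l * f (smPart l))) =
      ∑ n ∈ Finset.Icc 1 m, f n *
        (∑ l ∈ PF m, if l ≠ 0 ∧ smPart l = n then pconv muP a l else 0) := by
    rw [coeff_psOn]
    have push : ∀ n ∈ Finset.Icc 1 m, f n *
        (∑ l ∈ PF m, if l ≠ 0 ∧ smPart l = n then pconv muP a l else 0)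
        = ∑ l ∈ PF m, (f n * if l ≠ 0 ∧ smPart l = n then pconv muP a l else 0) := by
      intro n _
      rw [Finset.mul_sum]
    rw [Finset.sum_congr rfl push, Finset.sum_comm]
    apply Finset.sum_congr rfl
    intro l hl
    by_cases h0 : l = 0
    · simp [h0]
    · obtain ⟨hpos, hsum⟩ := mem_PF.mp hl
      have hmem : smPart l ∈ Finset.Icc 1 m := by
        rw [Finset.mem_Icc]
        constructor
        · exact hpos _ (smPart_mem h0)
        · rw [← hsum]
          exact Multiset.single_le_sum (fun x hx => Nat.zero_le x) _ (smPart_mem h0)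
      rw [if_pos h0]
      have : ∀ n ∈ Finset.Icc 1 m,
          (f n * if l ≠ 0 ∧ smPart l = n then pconv muP a l else 0)
          = (if smPart l = n then pconv muP a l * f n else 0) := by
        intro n _
        by_cases hsm : smPart l = n
        · rw [if_pos hsm, if_pos ⟨h0, hsm⟩]; ring
        · rw [if_neg hsm, if_neg (fun hh => hsm hh.2), mul_zero]
      rw [Finset.sum_congr rfl this, Finset.sum_ite_eq, if_pos hmem]
  have step4 : ∀ n ∈ Finset.Icc 1 m, f n *
      (∑ l ∈ PF m, if l ≠ 0 ∧ smPart l = n then pconv muP a l else 0)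
      = PowerSeries.coeff m (qPochFin m * T n) := by
    intro n hn
    rw [Finset.mem_Icc] at hn
    rw [step2 n hn.1 hn.2, core a ha hn.1 hn.2, ← PowerSeries.smul_eq_C_mul,
      PowerSeries.coeff_smul, smul_eq_mul]
  rw [step3, Finset.sum_congr rfl step4, ← map_sum, ← Finset.mul_sum, ← hS, step1.symm]
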